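/- arXiv:1605.00371 — 2 statements merged into one kernel-verified Lean document; each statement's English description precedes it below -/
import Mathlib

section
/- Let t be a finite rooted tree in which every internal node has at most k ≥ 2 children, and suppose some label a occurs on at least n ≥ 1 nodes of t. Then there exists a root-to-leaf path in t such that the number of nodes v on the path for which either v is labeled a, or some subtree hanging off v not on the path contains a node labeled a, is at least log_k(n). -/
open scoped Classical

/-- Finite rooted ordered trees with node labels from `α`. -/
inductive LTree (α : Type) where
  | node : α → List (LTree α) → LTree α

namespace LTree

/-- Number of nodes of the tree labeled `a`. -/
noncomputable def count {α : Type} (a : α) : LTree α → ℕ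
  | node b ts => (if b = a then 1 else 0) + (ts.attach.map (fun t => count a t.1)).sum
decreasing_by
  have := List.sizeOf_lt_of_mem t.2
  simp only [LTree.node.sizeOf_spec]
  omega

/-- Every node of the tree has at most `k` children. -/
inductive Bounded {α : Type} (k : ℕ) : LTree α → Prop
  | node (b : α) (ts : List (LTree α)) :
      ts.length ≤ k → (∀ t ∈ ts, Bounded k t) → Bounded k (node b ts)

/-- `PathCount a t c` holds if there is a root-to-leaf path in `t` such that the number of
nodes `v` on the path for which either `v` is labeled `a`, or some subtree hanging off `v`
not on the path contains a node labeled `a`, is exactly `c`. -/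
inductive PathCount {α : Type} (a : α) : LTree α → ℕ → Prop
  | leaf (b : α) : PathCount a (node b []) (if b = a then 1 else 0)
  | step (b : α) (ts : List (LTree α)) (i : ℕ) (t : LTree α) (c : ℕ)
      (hget : ts[i]? = some t) (hp : PathCount a t c) :
      PathCount a (node b ts)
        ((if b = a ∨ ∃ j, ∃ hj : j < ts.length, j ≠ i ∧ 0 < count a (ts[j]'hj)
          then 1 else 0) + c)

/-- Sum of a list of naturals all of whose entries except possibly index `i` are zero. -/
lemma sum_eq_of_others_zero : ∀ (l : List ℕ) (i : ℕ) (h : i < l.length),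
    (∀ j (hj : j < l.length), j ≠ i → l[j] = 0) → l.sum = l[i]
  | [], i, h, _ => by simp at h
  | x :: l, 0, h, hz => by
    have : l.sum = 0 := by
      rw [List.sum_eq_zero_iff]
      intro y hy
      obtain ⟨j, hj, rfl⟩ := List.mem_iff_getElem.mp hy
      have := hz (j + 1) (by simpa using Nat.succ_lt_succ hj) (by omega)
      simpa using this
    simp [this]
  | x :: l, (i+1), h, hz => by
    have hx : x = 0 := by
      have := hz 0 (by simp) (by omega)
      simpa using this
    have hrec := sum_eq_of_others_zero l i (by simpa using h)
      (fun j hj hne => by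
        have := hz (j + 1) (by simpa using Nat.succ_lt_succ hj) (by omega)
        simpa using this)
    simp [hx, hrec]

/-- Key combinatorial lemma: there is a path whose count `c` satisfies
`(k-1) * count a t + 1 ≤ k ^ c`. -/
theorem exists_path_count_bound {α : Type} (k : ℕ) (hk : 2 ≤ k) (a : α) :
    ∀ t : LTree α, Bounded k t →
      ∃ c : ℕ, PathCount a t c ∧ (k - 1) * count a t + 1 ≤ k ^ c
  | node b ts, hb => by
    obtain ⟨hlen, hball⟩ : ts.length ≤ k ∧ ∀ t ∈ ts, Bounded k t := by
      cases hb with | node _ _ h1 h2 => exact ⟨h1, h2⟩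
    rcases List.eq_nil_or_concat ts with rfl | hne
    · refine ⟨if b = a then 1 else 0, PathCount.leaf b, ?_⟩
      have hc : count a (node b ([] : List (LTree α))) = if b = a then 1 else 0 := by
        rw [count]; simp
      rw [hc]
      split <;> simp <;> omega
    · have hne' : ts ≠ [] := by rcases hne with ⟨l, e, rfl⟩; simp
      -- pick a child with maximal count
      obtain ⟨tmax, htmem, htmax⟩ :
          ∃ tmax ∈ ts, ∀ t' ∈ ts, count a t' ≤ count a tmax := by
        cases harg : ts.argmax (fun t' => count a t') with
        | none => exact absurd (List.argmax_eq_none.mp harg) hne'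
        | some tmax =>
          exact ⟨tmax, List.argmax_mem harg,
            fun t' ht' => List.le_of_mem_argmax ht' harg⟩
      obtain ⟨i, hi, hgeti⟩ := List.mem_iff_getElem.mp htmem
      have hget : ts[i]? = some tmax := by
        rw [List.getElem?_eq_getElem hi, hgeti]
      obtain ⟨c, hpc, hbound⟩ := exists_path_count_bound k hk a tmax (hball tmax htmem)
      set m := count a tmax with hm
      -- total count
      have hcnt : count a (node b ts) =
          (if b = a then 1 else 0) + (ts.map (count a)).sum := by
        rw [count]
        congr 1
        rw [List.attach_map_val (l := ts) (f := count a)]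
      by_cases hcond : b = a ∨ ∃ j, ∃ hj : j < ts.length, j ≠ i ∧ 0 < count a (ts[j]'hj)
      · refine ⟨1 + c, ?_, ?_⟩
        · have := PathCount.step (a := a) b ts i tmax c hget hpc
          rw [if_pos hcond] at this
          exact this
        · have hsum : (ts.map (count a)).sum ≤ ts.length * m := by
            have := List.sum_le_card_nsmul (ts.map (count a)) m (by
              intro x hx
              obtain ⟨t', ht', rfl⟩ := List.mem_map.mp hx
              exact htmax t' ht')
            simpa [smul_eq_mul, mul_comm] using this
          have h1 : count a (node b ts) ≤ 1 + k * m := by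
            rw [hcnt]
            have : ts.length * m ≤ k * m := Nat.mul_le_mul_right m hlen
            split <;> omega
          have h2 : (k - 1) * (1 + k * m) + 1 ≤ k ^ (1 + c) := by
            have hk1 : 1 ≤ k := by omega
            have : (k - 1) * (1 + k * m) + 1 = k * ((k - 1) * m) + k := by
              cases k with
              | zero => omega
              | succ k' => ring_nf; omega
            rw [this, pow_add, pow_one]
            calc k * ((k - 1) * m) + k = k * ((k - 1) * m + 1) := by ring
              _ ≤ k * k ^ c := Nat.mul_le_mul_left k hbound
          calc (k - 1) * count a (node b ts) + 1
              ≤ (k - 1) * (1 + k * m) + 1 := by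
                have := Nat.mul_le_mul_left (k - 1) h1; omega
            _ ≤ k ^ (1 + c) := h2
      · refine ⟨c, ?_, ?_⟩
        · have := PathCount.step (a := a) b ts i tmax c hget hpc
          rw [if_neg hcond] at this
          simpa using this
        · push_neg at hcond
          obtain ⟨hba, hz⟩ := hcond
          have hzero : ∀ j (hj : j < (ts.map (count a)).length), j ≠ i →
              (ts.map (count a))[j] = 0 := by
            intro j hj hne
            have hj' : j < ts.length := by simpa using hj
            have := hz j hj' hne
            simp only [List.getElem_map]
            omega
          have hsum : (ts.map (count a)).sum = m := by
            have hi' : i < (ts.map (count a)).length := by simpa using hi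
            have := sum_eq_of_others_zero (ts.map (count a)) i hi' hzero
            rw [this]
            simp [hgeti]
            rfl
          rw [hcnt, if_neg hba, hsum]
          simpa using hbound
termination_by t => sizeOf t
decreasing_by
  have := List.sizeOf_lt_of_mem htmem
  simp only [LTree.node.sizeOf_spec]
  omega

/-- If every internal node of `t` has at most `k ≥ 2` children and the label `a` occurs on at
least `n ≥ 1` nodes of `t`, then there is a root-to-leaf path on which the number of nodes
that are labeled `a` or have an off-path subtree containing `a` is at least `log_k n`. -/
theorem exists_path_logb_count {α : Type} (k n : ℕ) (hk : 2 ≤ k) (hn : 1 ≤ n)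
    (a : α) (t : LTree α) (hb : Bounded k t) (hcount : n ≤ count a t) :
    ∃ c : ℕ, PathCount a t c ∧ Real.logb k n ≤ (c : ℝ) := by
  obtain ⟨c, hpc, hbound⟩ := exists_path_count_bound k hk a t hb
  refine ⟨c, hpc, ?_⟩
  have hnk : n ≤ k ^ c := by
    have h1 : (k - 1) * n + 1 ≤ (k - 1) * count a t + 1 :=
      Nat.add_le_add_right (Nat.mul_le_mul_left _ hcount) 1
    have : n ≤ (k - 1) * n := Nat.le_mul_of_pos_left n (by omega)
    omega
  have hk1 : (1 : ℝ) < (k : ℝ) := by exact_mod_cast hk.trans_lt' one_lt_two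
  have hnk' : (n : ℝ) ≤ (k : ℝ) ^ c := by exact_mod_cast hnk
  calc Real.logb k n ≤ Real.logb k ((k : ℝ) ^ c) :=
        Real.logb_le_logb_of_le hk1 (by exact_mod_cast hn) hnk'
    _ = c := by
        rw [Real.logb_pow, Real.logb_self_eq_one hk1, mul_one]

end LTree
end

section
/- If L₁ and L₂ are languages of finite words over a finite alphabet and the downward closures (under the subword order) of L₁ and L₂ are disjoint, then the downward closure of L₁ is a piecewise testable language separating L₁ from L₂ (it contains L₁ and is disjoint from L₂). -/
/-- Piecewise testable languages: finite Boolean combinations of the languages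
`Σ* a₁ Σ* a₂ Σ* ... Σ* a_k Σ*`, i.e. of the languages `{u | a₁...a_k is a subword of u}`. -/
inductive PiecewiseTestable (α : Type) : Language α → Prop
  | piece (w : List α) : PiecewiseTestable α {u | w.Sublist u}
  | compl {L : Language α} : PiecewiseTestable α L → PiecewiseTestable α Lᶜ
  | union {L L' : Language α} :
      PiecewiseTestable α L → PiecewiseTestable α L' → PiecewiseTestable α (L ⊔ L')

/-- The downward closure of a language with respect to the (scattered) subword order. -/
def DownClosure {α : Type} (L : Language α) : Language α :=
  {u | ∃ w ∈ L, u.Sublist w}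

lemma sublistForall₂_eq_iff {α : Type} {l₁ l₂ : List α} :
    List.SublistForall₂ (· = ·) l₁ l₂ ↔ l₁.Sublist l₂ := by
  rw [List.sublistForall₂_iff]
  constructor
  · rintro ⟨l, hl, hs⟩
    rwa [show l₁ = l from (List.forall₂_eq_eq_eq ▸ hl : l₁ = l)]
  · exact fun h => ⟨l₁, List.forall₂_refl l₁, h⟩

/-- Sublist is a pwo on lists over a finite alphabet (Higman). -/
lemma sublist_pwo {α : Type} [Fintype α] :
    (Set.univ : Set (List α)).PartiallyWellOrderedOn List.Sublist := by
  have h1 : (Set.univ : Set α).PartiallyWellOrderedOn (· = ·) :=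
    Set.finite_univ.partiallyWellOrderedOn
  have h2 := Set.PartiallyWellOrderedOn.partiallyWellOrderedOn_sublistForall₂ (· = ·) h1
  intro f
  obtain ⟨m, n, hmn, hr⟩ := h2 (fun n => ⟨(f n).1, fun x _ => Set.mem_univ x⟩)
  exact ⟨m, n, hmn, sublistForall₂_eq_iff.1 (hr : List.SublistForall₂ (· = ·) (f m).1 (f n).1)⟩

/-- Every upward-closed set of words over a finite alphabet has a finite basis. -/
lemma upward_finite_basis {α : Type} [Fintype α] (U : Set (List α))
    (hU : ∀ ⦃u v : List α⦄, u ∈ U → u.Sublist v → v ∈ U) :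
    ∃ F : Set (List α), F.Finite ∧ U = ⋃ w ∈ F, {u | w.Sublist u} := by
  set M : Set (List α) := {u | u ∈ U ∧ ∀ v ∈ U, v.Sublist u → v = u} with hM
  refine ⟨M, ?_, ?_⟩
  · -- M is an antichain, hence finite by pwo
    have hanti : IsAntichain List.Sublist M := by
      intro a ha b hb hne hab
      exact hne (hb.2 a ha.1 hab)
    exact hanti.finite_of_partiallyWellOrderedOn
      (sublist_pwo.mono (Set.subset_univ M))
  · ext u
    simp only [Set.mem_iUnion, Set.mem_setOf_eq]
    constructor
    · intro hu
      -- find a minimal element below u by strong induction on length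
      have key : ∀ n : ℕ, ∀ u : List α, u.length ≤ n → u ∈ U →
          ∃ m ∈ M, m.Sublist u := by
        intro n
        induction n with
        | zero =>
          intro u hlen hu
          refine ⟨u, ⟨hu, fun v hv hvu => hvu.antisymm ?_⟩, List.Sublist.refl u⟩
          have : u = [] := List.length_eq_zero_iff.1 (Nat.le_zero.1 hlen)
          subst this
          exact List.nil_sublist v
        | succ n ih =>
          intro u hlen hu
          by_cases hmin : ∀ v ∈ U, v.Sublist u → v = u
          · exact ⟨u, ⟨hu, hmin⟩, List.Sublist.refl u⟩
          · push_neg at hmin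
            obtain ⟨v, hv, hvu, hne⟩ := hmin
            have hlt : v.length < u.length := by
              rcases Nat.lt_or_ge v.length u.length with h | h
              · exact h
              · exact absurd (hvu.eq_of_length_le h) hne
            obtain ⟨m, hm, hmv⟩ := ih v (by omega) hv
            exact ⟨m, hm, hmv.trans hvu⟩
      obtain ⟨m, hm, hmu⟩ := key u.length u le_rfl hu
      exact ⟨m, hm, hmu⟩
    · rintro ⟨w, hw, hwu⟩
      exact hU hw.1 hwu

lemma pt_of_finite_union {α : Type} (F : Set (List α)) (hF : F.Finite) :
    PiecewiseTestable α (⋃ w ∈ F, {u | w.Sublist u}) := by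
  refine Set.Finite.induction_on
    (motive := fun F _ => PiecewiseTestable α (⋃ w ∈ F, {u | w.Sublist u})) F hF ?_ ?_
  · show PiecewiseTestable α (⋃ w ∈ (∅ : Set (List α)), {u | w.Sublist u})
    have : (⋃ w ∈ (∅ : Set (List α)), {u | w.Sublist u}) =
        ({u | List.Sublist [] u} : Language α)ᶜ := by
      ext u
      simp [List.nil_sublist]
    rw [this]
    exact PiecewiseTestable.compl (PiecewiseTestable.piece [])
  · intro a s ha hsfin ih
    show PiecewiseTestable α (⋃ w ∈ insert a s, {u | w.Sublist u})
    have : (⋃ w ∈ insert a s, {u | w.Sublist u}) =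
        ({u | List.Sublist a u} : Language α) ⊔ (⋃ w ∈ s, {u | w.Sublist u}) := by
      rw [Set.biUnion_insert]; rfl
    rw [this]
    exact PiecewiseTestable.union (PiecewiseTestable.piece a) ih

/-- If `L₁` and `L₂` are word languages over a finite alphabet whose downward closures are
disjoint, then the downward closure of `L₁` is a piecewise testable language separating
`L₁` from `L₂`: it contains `L₁` and is disjoint from `L₂`. -/
theorem downward_closure_piecewise_testable_separator (α : Type) [Fintype α]
    (L₁ L₂ : Language α) (h : Disjoint (DownClosure L₁) (DownClosure L₂)) :
    PiecewiseTestable α (DownClosure L₁) ∧ L₁ ≤ DownClosure L₁ ∧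
      Disjoint (DownClosure L₁) L₂ := by
  have hle : ∀ L : Language α, L ≤ DownClosure L := by
    intro L w hw
    exact ⟨w, hw, List.Sublist.refl w⟩
  refine ⟨?_, hle L₁, ?_⟩
  · -- complement of DownClosure L₁ is upward closed
    have hup : ∀ ⦃u v : List α⦄, u ∈ ((DownClosure L₁ : Set (List α))ᶜ) → u.Sublist v →
        v ∈ ((DownClosure L₁ : Set (List α))ᶜ) := by
      intro u v hu huv hvmem
      obtain ⟨w, hw, hvw⟩ := hvmem
      exact hu ⟨w, hw, huv.trans hvw⟩
    obtain ⟨F, hFfin, hF⟩ := upward_finite_basis (α := α) (DownClosure L₁ : Set (List α))ᶜ hup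
    have : DownClosure L₁ = ((⋃ w ∈ F, {u | w.Sublist u} : Set (List α)))ᶜ := by
      rw [← hF]; exact (compl_compl _).symm
    rw [this]
    exact PiecewiseTestable.compl (pt_of_finite_union F hFfin)
  · exact Disjoint.mono_right (hle L₂) h
end
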